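/- Let C be a category of spaces and G an internal group. A G-homomorphism f: (X, a) → (Y, b) is open in the category [G, C] of G-objects if and only if the underlying morphism f: X → Y is open in C. -/

import Mathlib

open CategoryTheory CategoryTheory.Limits

universe u v

variable {C : Type v} [Category.{v} C] [HasFiniteProducts C]

/-- The presheaf `S^X : Y ↦ C(Y × X, S)`. -/
noncomputable def pow (S X : C) : Cᵒᵖ ⥤ Type v where
  obj Z := (Opposite.unop Z ⨯ X) ⟶ S
  map f := TypeCat.ofHom fun u => prod.map f.unop (𝟙 X) ≫ u
  map_id Z := by ext u; simp
  map_comp f g := by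
    ext u
    show prod.map ((f ≫ g).unop) (𝟙 X) ≫ u
      = prod.map g.unop (𝟙 X) ≫ prod.map f.unop (𝟙 X) ≫ u
    rw [← Category.assoc, prod.map_map]; simp

/-- Contravariant action `S^f : S^Y ⟶ S^X` for `f : X ⟶ Y`. -/
noncomputable def powMap (S : C) {X Y : C} (f : X ⟶ Y) : pow S Y ⟶ pow S X where
  app Z := TypeCat.ofHom fun u => prod.map (𝟙 _) f ≫ u
  naturality Z W g := by
    ext u
    change Opposite.unop Z ⨯ Y ⟶ S at u
    show prod.map (𝟙 _) f ≫ prod.map g.unop (𝟙 Y) ≫ u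
      = prod.map g.unop (𝟙 X) ≫ prod.map (𝟙 _) f ≫ u
    rw [← Category.assoc, ← Category.assoc, prod.map_map, prod.map_map]
    simp

@[simp] lemma powMap_id (S X : C) : powMap S (𝟙 X) = 𝟙 (pow S X) := by
  apply NatTrans.ext; funext Z; ext u; simp [powMap, pow]; rfl

@[simp] lemma powMap_comp (S : C) {X Y Z : C} (f : X ⟶ Y) (g : Y ⟶ Z) :
    powMap S (f ≫ g) = powMap S g ≫ powMap S f := by
  apply NatTrans.ext; funext W; ext u
  change Opposite.unop W ⨯ Z ⟶ S at u
  show prod.map (𝟙 _) (f ≫ g) ≫ u = prod.map (𝟙 _) f ≫ prod.map (𝟙 _) g ≫ u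
  rw [← Category.assoc, prod.map_map]; simp

/-- The presheaf `Y ↦ Nat(S^X, S^Y)`, i.e. the double exponential `(yS)^{S^X}`
described by its points. -/
noncomputable def doublePresheaf (S X : C) : Cᵒᵖ ⥤ Type v where
  obj Y := pow S X ⟶ pow S (Opposite.unop Y)
  map h := TypeCat.ofHom fun δ => δ ≫ powMap S h.unop
  map_id Y := by ext δ; simp
  map_comp h k := by ext δ; simp

section LatticeOps

variable {S : C}

/-- Pointwise top element. -/
noncomputable def elTop (top : ⊤_ C ⟶ S) {W : C} : W ⟶ S := terminal.from W ≫ top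
/-- Pointwise bottom element. -/
noncomputable def elBot (bot : ⊤_ C ⟶ S) {W : C} : W ⟶ S := terminal.from W ≫ bot
/-- Pointwise binary meet. -/
noncomputable def elMeet (meet : S ⨯ S ⟶ S) {W : C} (u v : W ⟶ S) : W ⟶ S :=
  prod.lift u v ≫ meet
/-- Pointwise binary join. -/
noncomputable def elJoin (join : S ⨯ S ⟶ S) {W : C} (u v : W ⟶ S) : W ⟶ S :=
  prod.lift u v ≫ join

/-- A natural transformation `S^X ⟶ S^Y` is a distributive lattice homomorphism if it
preserves the (pointwise) finite meets and joins. -/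
def IsDLHom (top bot : ⊤_ C ⟶ S) (meet join : S ⨯ S ⟶ S) {X Y : C}
    (α : pow S X ⟶ pow S Y) : Prop :=
  (∀ Z : Cᵒᵖ, α.app Z (elTop top) = elTop top) ∧
  (∀ Z : Cᵒᵖ, α.app Z (elBot bot) = elBot bot) ∧
  (∀ (Z : Cᵒᵖ) (u v : (pow S X).obj Z), α.app Z (elMeet meet u v) = elMeet meet (α.app Z u) (α.app Z v)) ∧
  (∀ (Z : Cᵒᵖ) (u v : (pow S X).obj Z), α.app Z (elJoin join u v) = elJoin join (α.app Z u) (α.app Z v))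

/-- A join semilattice homomorphism `S^X ⟶ S^Y` (preserves `0` and binary joins). -/
def IsJoinHom (bot : ⊤_ C ⟶ S) (join : S ⨯ S ⟶ S) {X Y : C} (α : pow S X ⟶ pow S Y) : Prop :=
  (∀ Z : Cᵒᵖ, α.app Z (elBot bot) = elBot bot) ∧
  (∀ (Z : Cᵒᵖ) (u v : (pow S X).obj Z), α.app Z (elJoin join u v) = elJoin join (α.app Z u) (α.app Z v))

/-- A meet semilattice homomorphism `S^X ⟶ S^Y` (preserves `1` and binary meets). -/
def IsMeetHom (top : ⊤_ C ⟶ S) (meet : S ⨯ S ⟶ S) {X Y : C} (α : pow S X ⟶ pow S Y) : Prop :=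
  (∀ Z : Cᵒᵖ, α.app Z (elTop top) = elTop top) ∧
  (∀ (Z : Cᵒᵖ) (u v : (pow S X).obj Z), α.app Z (elMeet meet u v) = elMeet meet (α.app Z u) (α.app Z v))

/-- Pointwise meet of two natural transformations into `S^X`. -/
noncomputable def meetNat (meet : S ⨯ S ⟶ S) {F : Cᵒᵖ ⥤ Type v} {X : C}
    (α β : F ⟶ pow S X) : F ⟶ pow S X where
  app Z := TypeCat.ofHom fun u => elMeet meet (α.app Z u) (β.app Z u)
  naturality Z W g := by
    ext u
    have hα := ConcreteCategory.congr_hom (α.naturality g) u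
    have hβ := ConcreteCategory.congr_hom (β.naturality g) u
    simp only [types_comp_apply] at hα hβ
    show elMeet meet (α.app W (F.map g u)) (β.app W (F.map g u))
      = prod.map g.unop (𝟙 X) ≫ elMeet meet (α.app Z u) (β.app Z u)
    rw [hα, hβ]
    show elMeet meet (prod.map g.unop (𝟙 X) ≫ α.app Z u) (prod.map g.unop (𝟙 X) ≫ β.app Z u) = _
    unfold elMeet
    exact (prod.comp_lift_assoc _ _ _ _).symm

/-- Pointwise join of two natural transformations into `S^X`. -/
noncomputable def joinNat (join : S ⨯ S ⟶ S) {F : Cᵒᵖ ⥤ Type v} {X : C}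
    (α β : F ⟶ pow S X) : F ⟶ pow S X where
  app Z := TypeCat.ofHom fun u => elJoin join (α.app Z u) (β.app Z u)
  naturality Z W g := by
    ext u
    have hα := ConcreteCategory.congr_hom (α.naturality g) u
    have hβ := ConcreteCategory.congr_hom (β.naturality g) u
    simp only [types_comp_apply] at hα hβ
    show elJoin join (α.app W (F.map g u)) (β.app W (F.map g u))
      = prod.map g.unop (𝟙 X) ≫ elJoin join (α.app Z u) (β.app Z u)
    rw [hα, hβ]
    show elJoin join (prod.map g.unop (𝟙 X) ≫ α.app Z u) (prod.map g.unop (𝟙 X) ≫ β.app Z u) = _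
    unfold elJoin
    exact (prod.comp_lift_assoc _ _ _ _).symm

end LatticeOps

/-- The natural transformation `S^{(X+X)+Y} ⟶ S^X` given by
`(u,v,w) ↦ u ⊓ (v ⊔ S^f(w))`, used in the statement of Axiom 7. -/
noncomputable def phiNat {S : C} (meet join : S ⨯ S ⟶ S) [HasBinaryCoproducts C]
    {X Y : C} (f : X ⟶ Y) : pow S ((X ⨿ X) ⨿ Y) ⟶ pow S X :=
  meetNat meet (powMap S ((coprod.inl : X ⟶ X ⨿ X) ≫ coprod.inl))
    (joinNat join (powMap S ((coprod.inr : X ⟶ X ⨿ X) ≫ coprod.inl))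
      (powMap S (coprod.inr : Y ⟶ (X ⨿ X) ⨿ Y) ≫ powMap S f))

noncomputable instance powPartialOrder [∀ A B : C, PartialOrder (A ⟶ B)] (S X : C) (Z : Cᵒᵖ) :
    PartialOrder ((pow S X).obj Z) :=
  inferInstanceAs (PartialOrder (Opposite.unop Z ⨯ X ⟶ S))

/-- A *category of spaces*: an order-enriched category with (order-enriched) finite limits
and finite coproducts (Axiom 1), pullback-stable coproducts (Axiom 2), a Sierpiński object
`S` (Axiom 3) which is double exponentiable (Axiom 4), such that distributive lattice
homomorphisms between double exponentials are represented by morphisms (Axiom 5),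
(de/in)flationary idempotents split in the (upper/lower) power Kleisli categories (Axiom 6),
and `S^(-)` sends equalizers to coequalizers of the appropriate pairs (Axiom 7). -/
class CategoryOfSpaces (C : Type v) [Category.{v} C] [∀ X Y : C, PartialOrder (X ⟶ Y)]
    [HasFiniteLimits C] [HasFiniteCoproducts C] : Type v where
  /-- composition is monotone (order enrichment) -/
  comp_le : ∀ {X Y Z : C} {f f' : X ⟶ Y} {g g' : Y ⟶ Z}, f ≤ f' → g ≤ g' → f ≫ g ≤ f' ≫ g'
  /-- the universal property of products is order-enriched -/
  lift_le : ∀ {X Y Z : C} {f f' : X ⟶ Y} {g g' : X ⟶ Z}, f ≤ f' → g ≤ g' →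
    prod.lift f g ≤ prod.lift f' g'
  /-- Axiom 2: pullback preserves finite coproducts -/
  pullback_preserves_coproducts : ∀ {X Y : C} (f : X ⟶ Y),
    Nonempty (PreservesFiniteCoproducts (Over.pullback f))
  /-- Axiom 3: the Sierpiński object -/
  S : C
  top : ⊤_ C ⟶ S
  bot : ⊤_ C ⟶ S
  meet : S ⨯ S ⟶ S
  join : S ⨯ S ⟶ S
  /-- `1 : 1 ⟶ S` is right adjoint to `! : S ⟶ 1` -/
  top_adj : 𝟙 S ≤ terminal.from S ≫ top
  /-- `0 : 1 ⟶ S` is left adjoint to `! : S ⟶ 1` -/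
  bot_adj : terminal.from S ≫ bot ≤ 𝟙 S
  /-- `⊓` is right adjoint to the diagonal -/
  meet_unit : 𝟙 S ≤ prod.lift (𝟙 S) (𝟙 S) ≫ meet
  meet_counit : meet ≫ prod.lift (𝟙 S) (𝟙 S) ≤ 𝟙 (S ⨯ S)
  /-- `⊔` is left adjoint to the diagonal -/
  join_unit : 𝟙 (S ⨯ S) ≤ join ≫ prod.lift (𝟙 S) (𝟙 S)
  join_counit : prod.lift (𝟙 S) (𝟙 S) ≫ join ≤ 𝟙 S
  /-- `S` is a distributive lattice -/
  distrib : prod.map (𝟙 S) join ≫ meet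
    = prod.lift (prod.map (𝟙 S) prod.fst ≫ meet) (prod.map (𝟙 S) prod.snd ≫ meet) ≫ join
  /-- a morphism into `S` is determined by the pullback of `1` -/
  sierp_top : ∀ {X : C} (a b : X ⟶ S),
    (∀ {T : C} (x : T ⟶ X), x ≫ a = terminal.from T ≫ top ↔ x ≫ b = terminal.from T ≫ top) →
    a = b
  /-- a morphism into `S` is determined by the pullback of `0` -/
  sierp_bot : ∀ {X : C} (a b : X ⟶ S),
    (∀ {T : C} (x : T ⟶ X), x ≫ a = terminal.from T ≫ bot ↔ x ≫ b = terminal.from T ≫ bot) →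
    a = b
  /-- Axiom 4: `S` is double exponentiable -/
  double_exp : ∀ X : C, ∃ P : C, Nonempty (doublePresheaf S X ≅ yoneda.obj P)
  /-- Axiom 5 -/
  ax5 : ∀ {X Y : C} (α : pow S X ⟶ pow S Y), IsDLHom top bot meet join α →
    ∃! f : Y ⟶ X, α = powMap S f
  /-- Axiom 6 (i): inflationary idempotents split in the lower power Kleisli category -/
  ax6L : ∀ {X : C} (α : pow S X ⟶ pow S X), IsJoinHom bot join α →
    (∀ (Z : Cᵒᵖ) (u : Opposite.unop Z ⨯ X ⟶ S), u ≤ (α.app Z u : Opposite.unop Z ⨯ X ⟶ S)) →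
    α ≫ α = α →
    ∃ (X₀ : C) (θ : pow S X₀ ⟶ pow S X) (γ : pow S X ⟶ pow S X₀),
      IsJoinHom bot join θ ∧ IsJoinHom bot join γ ∧ γ ≫ θ = α ∧ θ ≫ γ = 𝟙 (pow S X₀)
  /-- Axiom 6 (ii): deflationary idempotents split in the upper power Kleisli category -/
  ax6U : ∀ {X : C} (α : pow S X ⟶ pow S X), IsMeetHom top meet α →
    (∀ (Z : Cᵒᵖ) (u : Opposite.unop Z ⨯ X ⟶ S), (α.app Z u : Opposite.unop Z ⨯ X ⟶ S) ≤ u) →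
    α ≫ α = α →
    ∃ (X₀ : C) (θ : pow S X₀ ⟶ pow S X) (γ : pow S X ⟶ pow S X₀),
      IsMeetHom top meet θ ∧ IsMeetHom top meet γ ∧ γ ≫ θ = α ∧ θ ≫ γ = 𝟙 (pow S X₀)
  /-- Axiom 7 -/
  ax7 : ∀ {E X Y : C} (e : E ⟶ X) (f g : X ⟶ Y) (w : e ≫ f = e ≫ g),
    Nonempty (IsLimit (Fork.ofι e w)) →
    phiNat meet join f ≫ powMap S e = phiNat meet join g ≫ powMap S e ∧
    ∀ {W : C} (κ : pow S X ⟶ pow S W), phiNat meet join f ≫ κ = phiNat meet join g ≫ κ →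
      ∃! κ' : pow S E ⟶ pow S W, κ = powMap S e ≫ κ'

variable {C : Type v} [Category.{v} C] [∀ X Y : C, PartialOrder (X ⟶ Y)]
  [HasFiniteLimits C] [HasFiniteCoproducts C] [SC : CategoryOfSpaces C]

/-- The Sierpiński object of a category of spaces. -/
noncomputable def Sierp (C : Type v) [Category.{v} C] [∀ X Y : C, PartialOrder (X ⟶ Y)]
    [HasFiniteLimits C] [HasFiniteCoproducts C] [SC : CategoryOfSpaces C] : C := SC.S

/-- `E` witnesses that `f` is an open map: `E ⊣ S^f` and the Frobenius condition holds. -/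
def IsOpenVia {X Y : C} (f : X ⟶ Y) (E : pow (Sierp C) X ⟶ pow (Sierp C) Y) : Prop :=
  (∀ (Z : Cᵒᵖ) (u : Opposite.unop Z ⨯ X ⟶ Sierp C) (v : Opposite.unop Z ⨯ Y ⟶ Sierp C),
      (E.app Z u : Opposite.unop Z ⨯ Y ⟶ Sierp C) ≤ v ↔
        u ≤ ((powMap (Sierp C) f).app Z v : Opposite.unop Z ⨯ X ⟶ Sierp C)) ∧
  (∀ (Z : Cᵒᵖ) (u : Opposite.unop Z ⨯ X ⟶ Sierp C) (v : Opposite.unop Z ⨯ Y ⟶ Sierp C),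
      E.app Z (elMeet SC.meet u ((powMap (Sierp C) f).app Z v))
        = elMeet SC.meet (E.app Z u) v)

/-- A morphism is open if some `∃_f` witnesses it. -/
def IsOpenMor {X Y : C} (f : X ⟶ Y) : Prop := ∃ E, IsOpenVia f E

/-- An object is open if the unique map to the terminal object is open. -/
def IsOpenOb (X : C) : Prop := IsOpenMor (terminal.from X)

/-- `p#` is a triquotient assignment on `p`. -/
def IsTriqAssign {Z Y : C} (p : Z ⟶ Y) (ph : pow (Sierp C) Z ⟶ pow (Sierp C) Y) : Prop :=
  (∀ (W : Cᵒᵖ) (u : Opposite.unop W ⨯ Z ⟶ Sierp C) (v : Opposite.unop W ⨯ Y ⟶ Sierp C),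
      elMeet SC.meet (ph.app W u) v
        ≤ (ph.app W (elMeet SC.meet u ((powMap (Sierp C) p).app W v))
            : Opposite.unop W ⨯ Y ⟶ Sierp C)) ∧
  (∀ (W : Cᵒᵖ) (u : Opposite.unop W ⨯ Z ⟶ Sierp C) (v : Opposite.unop W ⨯ Y ⟶ Sierp C),
      (ph.app W (elJoin SC.join u ((powMap (Sierp C) p).app W v))
          : Opposite.unop W ⨯ Y ⟶ Sierp C) ≤ elJoin SC.join (ph.app W u) v)

/-- `p` is a triquotient surjection. -/
def IsTriqSurj {Z Y : C} (p : Z ⟶ Y) : Prop :=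
  ∃ ph, IsTriqAssign p ph ∧ powMap (Sierp C) p ≫ ph = 𝟙 (pow (Sierp C) Y)

/-- An internal group in a category with finite products. -/
structure GroupObject (C : Type u) [Category.{v} C] [HasFiniteProducts C] where
  G : C
  m : G ⨯ G ⟶ G
  e : ⊤_ C ⟶ G
  i : G ⟶ G
  mul_assoc : prod.map m (𝟙 G) ≫ m = (prod.associator G G G).hom ≫ prod.map (𝟙 G) m ≫ m
  one_mul : prod.lift (terminal.from G ≫ e) (𝟙 G) ≫ m = 𝟙 G
  mul_one : prod.lift (𝟙 G) (terminal.from G ≫ e) ≫ m = 𝟙 G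
  inv_mul : prod.lift i (𝟙 G) ≫ m = terminal.from G ≫ e
  mul_inv : prod.lift (𝟙 G) i ≫ m = terminal.from G ≫ e

variable (Gr : GroupObject C)

/-- A `G`-object: an object with a `G`-action. -/
structure GObject (Gr : GroupObject C) where
  X : C
  act : Gr.G ⨯ X ⟶ X
  act_one : prod.lift (terminal.from X ≫ Gr.e) (𝟙 X) ≫ act = 𝟙 X
  act_mul : prod.map (𝟙 Gr.G) act ≫ act
    = (prod.associator Gr.G Gr.G X).inv ≫ prod.map Gr.m (𝟙 X) ≫ act

/-- A `G`-equivariant morphism. -/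
@[ext]
structure GHom (A B : GObject Gr) where
  f : A.X ⟶ B.X
  equivariant : A.act ≫ f = prod.map (𝟙 Gr.G) f ≫ B.act

instance : Category (GObject Gr) where
  Hom A B := GHom Gr A B
  id A := ⟨𝟙 A.X, by simp⟩
  comp {A B D} u v := ⟨u.f ≫ v.f, by
    rw [← Category.assoc, u.equivariant, Category.assoc, v.equivariant,
      ← Category.assoc, prod.map_map]
    simp⟩
  id_comp u := by apply GHom.ext; simp
  comp_id u := by apply GHom.ext; simp
  assoc u v w := by apply GHom.ext; simp

@[simp] lemma GHom.id_f (A : GObject Gr) : (𝟙 A : A ⟶ A).f = 𝟙 A.X := rfl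
@[simp] lemma GHom.comp_f {A B D : GObject Gr} (u : A ⟶ B) (v : B ⟶ D) :
    (u ≫ v).f = u.f ≫ v.f := rfl

/-- The diagonal action on the product of the underlying objects of two `G`-objects. -/
noncomputable def productAction (Z Xa : GObject Gr) :
    Gr.G ⨯ (Z.X ⨯ Xa.X) ⟶ Z.X ⨯ Xa.X :=
  prod.lift (prod.map (𝟙 Gr.G) prod.fst ≫ Z.act) (prod.map (𝟙 Gr.G) prod.snd ≫ Xa.act)

lemma productAction_natural_left {Z W : GObject Gr} (g : W ⟶ Z) (Xa : GObject Gr) :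
    prod.map (𝟙 Gr.G) (prod.map g.f (𝟙 Xa.X)) ≫ productAction Gr Z Xa
      = productAction Gr W Xa ≫ prod.map g.f (𝟙 Xa.X) := by
  unfold productAction
  apply Limits.prod.hom_ext
  · simp only [Category.assoc, prod.map_fst, prod.lift_fst, prod.lift_fst_assoc,
      prod.map_fst_assoc]
    rw [g.equivariant, ← Category.assoc, ← Category.assoc, prod.map_map, prod.map_map]
    simp
  · simp only [Category.assoc, prod.map_snd, prod.lift_snd, prod.lift_snd_assoc,
      prod.map_snd_assoc]
    rw [← Category.assoc, prod.map_map]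
    simp

lemma productAction_natural_right (Z : GObject Gr) {Xa Xb : GObject Gr} (k : Xa ⟶ Xb) :
    prod.map (𝟙 Gr.G) (prod.map (𝟙 Z.X) k.f) ≫ productAction Gr Z Xb
      = productAction Gr Z Xa ≫ prod.map (𝟙 Z.X) k.f := by
  unfold productAction
  apply Limits.prod.hom_ext
  · simp only [Category.assoc, prod.map_fst, prod.lift_fst, prod.lift_fst_assoc,
      prod.map_fst_assoc]
    rw [← Category.assoc, prod.map_map]
    simp
  · simp only [Category.assoc, prod.map_snd, prod.lift_snd, prod.lift_snd_assoc,
      prod.map_snd_assoc]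
    rw [k.equivariant, ← Category.assoc, ← Category.assoc, prod.map_map, prod.map_map]
    simp

/-- The object of `G`-equivariant maps `(S,π₂)^{(X,a)}` as a presheaf on `[G,C]`,
where `S` carries the trivial action. -/
noncomputable def gpow (S : C) (Xa : GObject Gr) : (GObject Gr)ᵒᵖ ⥤ Type v where
  obj Z := { u : (Opposite.unop Z).X ⨯ Xa.X ⟶ S //
      productAction Gr (Opposite.unop Z) Xa ≫ u = prod.snd ≫ u }
  map {Z W} g := TypeCat.ofHom fun u => ⟨prod.map g.unop.f (𝟙 Xa.X) ≫ u.1, by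
    rw [← Category.assoc, ← productAction_natural_left, Category.assoc, u.2,
      ← Category.assoc, prod.map_snd, Category.assoc]⟩
  map_id Z := by ext u; simp
  map_comp f g := by
    ext u
    show prod.map (g.unop.f ≫ f.unop.f) (𝟙 Xa.X) ≫ u.1
      = prod.map g.unop.f (𝟙 Xa.X) ≫ prod.map f.unop.f (𝟙 Xa.X) ≫ u.1
    rw [← Category.assoc, prod.map_map]; simp

/-- Contravariant action of a `G`-homomorphism on `gpow`. -/
noncomputable def gpowMap (S : C) {Xa Xb : GObject Gr} (k : Xa ⟶ Xb) :
    gpow Gr S Xb ⟶ gpow Gr S Xa where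
  app Z := TypeCat.ofHom fun u => ⟨prod.map (𝟙 (Opposite.unop Z).X) k.f ≫ u.1, by
    rw [← Category.assoc, ← productAction_natural_right, Category.assoc, u.2,
      ← Category.assoc, prod.map_snd, Category.assoc]⟩
  naturality Z W g := by
    ext u; apply Subtype.ext
    show prod.map (𝟙 _) k.f ≫ prod.map g.unop.f (𝟙 Xb.X) ≫ u.1
      = prod.map g.unop.f (𝟙 Xa.X) ≫ prod.map (𝟙 _) k.f ≫ u.1
    rw [← Category.assoc, ← Category.assoc, prod.map_map, prod.map_map]
    simp

variable {Gr : GroupObject C}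

/-- Pointwise meet of equivariant maps (the meet of `(S, π₂)` in `[G,C]`). -/
noncomputable def gMeet (Xa : GObject Gr) (Z : (GObject Gr)ᵒᵖ)
    (u v : (gpow Gr (Sierp C) Xa).obj Z) : (gpow Gr (Sierp C) Xa).obj Z :=
  ⟨elMeet SC.meet u.1 v.1, by
    unfold elMeet
    erw [← Category.assoc, prod.comp_lift, u.2, v.2, ← prod.comp_lift, Category.assoc]; rfl⟩

/-- `E` witnesses openness of a `G`-homomorphism `f` relative to `[G, C]`:
`E ⊣ (S,π₂)^f` with the Frobenius condition. -/
def GIsOpenVia {Xa Yb : GObject Gr} (f : Xa ⟶ Yb)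
    (E : gpow Gr (Sierp C) Xa ⟶ gpow Gr (Sierp C) Yb) : Prop :=
  (∀ (Z : (GObject Gr)ᵒᵖ) (u : (gpow Gr (Sierp C) Xa).obj Z)
      (v : (gpow Gr (Sierp C) Yb).obj Z),
      (E.app Z u).1 ≤ v.1 ↔ u.1 ≤ ((gpowMap Gr (Sierp C) f).app Z v).1) ∧
  (∀ (Z : (GObject Gr)ᵒᵖ) (u : (gpow Gr (Sierp C) Xa).obj Z)
      (v : (gpow Gr (Sierp C) Yb).obj Z),
      E.app Z (gMeet Xa Z u ((gpowMap Gr (Sierp C) f).app Z v)) = gMeet Yb Z (E.app Z u) v)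


/-! ### Auxiliary: element calculus for group objects and actions -/

section GOpenAux

variable {T T' : C}

/-- The identity element as a generalized element. -/
noncomputable def gone (Gr : GroupObject C) (T : C) : T ⟶ Gr.G := terminal.from T ≫ Gr.e

/-- Multiplication of generalized elements. -/
noncomputable def gmul (g h : T ⟶ Gr.G) : T ⟶ Gr.G := prod.lift g h ≫ Gr.m

/-- Inverse of a generalized element. -/
noncomputable def ginv (g : T ⟶ Gr.G) : T ⟶ Gr.G := g ≫ Gr.i

/-- Action on generalized elements. -/
noncomputable def asm (M : GObject Gr) (g : T ⟶ Gr.G) (x : T ⟶ M.X) : T ⟶ M.X :=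
  prod.lift g x ≫ M.act

lemma comp_gone (σ : T' ⟶ T) : σ ≫ gone Gr T = gone Gr T' := by
  unfold gone; rw [← Category.assoc, terminal.comp_from]

lemma comp_gmul (σ : T' ⟶ T) (g h : T ⟶ Gr.G) :
    σ ≫ gmul g h = gmul (σ ≫ g) (σ ≫ h) := by
  unfold gmul; rw [← Category.assoc, prod.comp_lift]

lemma comp_ginv (σ : T' ⟶ T) (g : T ⟶ Gr.G) : σ ≫ ginv g = ginv (σ ≫ g) := by
  unfold ginv; rw [Category.assoc]

lemma comp_asm (M : GObject Gr) (σ : T' ⟶ T) (g : T ⟶ Gr.G) (x : T ⟶ M.X) :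
    σ ≫ asm M g x = asm M (σ ≫ g) (σ ≫ x) := by
  unfold asm; rw [← Category.assoc, prod.comp_lift]

lemma gone_mul (g : T ⟶ Gr.G) : gmul (gone Gr T) g = g := by
  unfold gmul gone
  rw [show prod.lift (terminal.from T ≫ Gr.e) g
      = g ≫ prod.lift (terminal.from Gr.G ≫ Gr.e) (𝟙 Gr.G) by
    rw [prod.comp_lift, ← Category.assoc, terminal.comp_from, Category.comp_id]]
  rw [Category.assoc, Gr.one_mul, Category.comp_id]

lemma gmul_one (g : T ⟶ Gr.G) : gmul g (gone Gr T) = g := by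
  unfold gmul gone
  rw [show prod.lift g (terminal.from T ≫ Gr.e)
      = g ≫ prod.lift (𝟙 Gr.G) (terminal.from Gr.G ≫ Gr.e) by
    rw [prod.comp_lift, ← Category.assoc, terminal.comp_from, Category.comp_id]]
  rw [Category.assoc, Gr.mul_one, Category.comp_id]

lemma ginv_mul (g : T ⟶ Gr.G) : gmul (ginv g) g = gone Gr T := by
  unfold gmul ginv gone
  rw [show prod.lift (g ≫ Gr.i) g = g ≫ prod.lift Gr.i (𝟙 Gr.G) by
    rw [prod.comp_lift, Category.comp_id]]
  rw [Category.assoc, Gr.inv_mul, ← Category.assoc, terminal.comp_from]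

lemma gmul_ginv (g : T ⟶ Gr.G) : gmul g (ginv g) = gone Gr T := by
  unfold gmul ginv gone
  rw [show prod.lift g (g ≫ Gr.i) = g ≫ prod.lift (𝟙 Gr.G) Gr.i by
    rw [prod.comp_lift, Category.comp_id]]
  rw [Category.assoc, Gr.mul_inv, ← Category.assoc, terminal.comp_from]

lemma ginv_gone : ginv (gone Gr T) = gone Gr T := by
  have h := ginv_mul (Gr := Gr) (gone Gr T)
  rwa [gmul_one] at h

lemma asm_one (M : GObject Gr) (x : T ⟶ M.X) : asm M (gone Gr T) x = x := by
  unfold asm gone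
  rw [show prod.lift (terminal.from T ≫ Gr.e) x
      = x ≫ prod.lift (terminal.from M.X ≫ Gr.e) (𝟙 M.X) by
    rw [prod.comp_lift, ← Category.assoc, terminal.comp_from, Category.comp_id]]
  rw [Category.assoc, M.act_one, Category.comp_id]

lemma asm_mul (M : GObject Gr) (g h : T ⟶ Gr.G) (x : T ⟶ M.X) :
    asm M (gmul g h) x = asm M g (asm M h x) := by
  have key := congrArg (fun t => prod.lift g (prod.lift h x) ≫ t) M.act_mul
  have h1 : prod.lift g (prod.lift h x) ≫ (prod.map (𝟙 Gr.G) M.act ≫ M.act)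
      = asm M g (asm M h x) := by
    rw [← Category.assoc, prod.lift_map, Category.comp_id]; rfl
  have h2 : prod.lift g (prod.lift h x)
        ≫ ((prod.associator Gr.G Gr.G M.X).inv ≫ prod.map Gr.m (𝟙 M.X) ≫ M.act)
      = asm M (gmul g h) x := by
    have ha : prod.lift g (prod.lift h x) ≫ (prod.associator Gr.G Gr.G M.X).inv
        = prod.lift (prod.lift g h) x := by
      apply Limits.prod.hom_ext
      · apply Limits.prod.hom_ext <;> simp [Limits.prod.associator, prod.lift_fst, prod.lift_snd, prod.lift_fst_assoc, prod.lift_snd_assoc]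
      · simp [Limits.prod.associator, prod.lift_fst, prod.lift_snd, prod.lift_fst_assoc, prod.lift_snd_assoc]
    rw [← Category.assoc, ha, ← Category.assoc, prod.lift_map, Category.comp_id]; rfl
  rw [← h1, key, h2]

lemma asm_cancel (M : GObject Gr) (g : T ⟶ Gr.G) (x : T ⟶ M.X) :
    asm M (ginv g) (asm M g x) = x := by
  rw [← asm_mul, ginv_mul, asm_one]

lemma asm_cancel' (M : GObject Gr) (g : T ⟶ Gr.G) (x : T ⟶ M.X) :
    asm M g (asm M (ginv g) x) = x := by
  rw [← asm_mul, gmul_ginv, asm_one]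

lemma asm_injective (M : GObject Gr) (g : T ⟶ Gr.G) {x y : T ⟶ M.X}
    (h : asm M g x = asm M g y) : x = y := by
  have := congrArg (asm M (ginv g)) h
  rwa [asm_cancel, asm_cancel] at this

lemma asm_inv_mul_rev (M : GObject Gr) (g h : T ⟶ Gr.G) (x : T ⟶ M.X) :
    asm M (ginv (gmul g h)) (asm M g x) = asm M (ginv h) x := by
  apply asm_injective M (gmul g h)
  rw [asm_cancel', asm_mul, asm_cancel']

lemma asm_comp_f {Xa Yb : GObject Gr} (f : Xa ⟶ Yb) (g : T ⟶ Gr.G) (x : T ⟶ Xa.X) :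
    asm Xa g x ≫ f.f = asm Yb g (x ≫ f.f) := by
  unfold asm
  rw [Category.assoc, f.equivariant, ← Category.assoc, prod.lift_map, Category.comp_id]

lemma productAction_eq (Z M : GObject Gr) :
    productAction Gr Z M = prod.lift (asm Z prod.fst (prod.snd ≫ prod.fst))
      (asm M prod.fst (prod.snd ≫ prod.snd)) := by
  unfold productAction asm
  have h1 : prod.map (𝟙 Gr.G) (prod.fst : Z.X ⨯ M.X ⟶ Z.X)
      = prod.lift prod.fst (prod.snd ≫ prod.fst) := by
    apply Limits.prod.hom_ext <;> simp [prod.lift_fst, prod.lift_snd, prod.lift_fst_assoc, prod.lift_snd_assoc]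
  have h2 : prod.map (𝟙 Gr.G) (prod.snd : Z.X ⨯ M.X ⟶ M.X)
      = prod.lift prod.fst (prod.snd ≫ prod.snd) := by
    apply Limits.prod.hom_ext <;> simp [prod.lift_fst, prod.lift_snd, prod.lift_fst_assoc, prod.lift_snd_assoc]
  rw [h1, h2]

lemma equivariant_iff {S' : C} (Z M : GObject Gr) (u : Z.X ⨯ M.X ⟶ S') :
    (productAction Gr Z M ≫ u = prod.snd ≫ u) ↔
    ∀ {T : C} (g : T ⟶ Gr.G) (w : T ⟶ Z.X) (x : T ⟶ M.X),
      prod.lift (asm Z g w) (asm M g x) ≫ u = prod.lift w x ≫ u := by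
  constructor
  · intro h T g w x
    have key := congrArg (fun t => prod.lift g (prod.lift w x) ≫ t) h
    have e1 : prod.lift g (prod.lift w x)
          ≫ prod.lift (asm Z prod.fst (prod.snd ≫ prod.fst))
              (asm M prod.fst (prod.snd ≫ prod.snd))
        = prod.lift (asm Z g w) (asm M g x) := by
      have d1 : prod.lift g (prod.lift w x) ≫ (prod.snd ≫ prod.fst : _ ⟶ Z.X) = w := by simp [prod.lift_fst, prod.lift_snd, prod.lift_fst_assoc, prod.lift_snd_assoc]
      have d2 : prod.lift g (prod.lift w x) ≫ (prod.snd ≫ prod.snd : _ ⟶ M.X) = x := by simp [prod.lift_fst, prod.lift_snd, prod.lift_fst_assoc, prod.lift_snd_assoc]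
      rw [prod.comp_lift, comp_asm, comp_asm, prod.lift_fst, d1, d2]
    have e2 : prod.lift g (prod.lift w x) ≫ (prod.snd : _ ⟶ Z.X ⨯ M.X) = prod.lift w x :=
      prod.lift_snd _ _
    rw [productAction_eq, ← Category.assoc, e1, ← Category.assoc, e2] at key
    exact key
  · intro h
    rw [productAction_eq, h prod.fst (prod.snd ≫ prod.fst) (prod.snd ≫ prod.snd)]
    congr 1
    apply Limits.prod.hom_ext <;> simp [prod.lift_fst, prod.lift_snd, prod.lift_fst_assoc, prod.lift_snd_assoc]

end GOpenAux


section GOpenMPR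

variable {Xa Yb : GObject Gr}

/-- Monotone precomposition. -/
lemma pre_mono {P Q : C} (t : P ⟶ Q) {R : C} {a b : Q ⟶ R} (h : a ≤ b) : t ≫ a ≤ t ≫ b :=
  SC.comp_le (le_refl t) h

lemma pre_iso_le_iff {P Q : C} {p p' : P ⟶ P} (h1 : p ≫ p' = 𝟙 P) (h2 : p' ≫ p = 𝟙 P)
    (a b : P ⟶ Q) : p ≫ a ≤ b ↔ a ≤ p' ≫ b := by
  constructor
  · intro h
    have := pre_mono p' h
    rwa [← Category.assoc, h2, Category.id_comp] at this
  · intro h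
    have := pre_mono p h
    rwa [← Category.assoc, h1, Category.id_comp] at this

/-- The twist automorphism of `V ⨯ M.X` induced by `γ : V ⟶ G`. -/
noncomputable def twist (M : GObject Gr) {V : C} (γ : V ⟶ Gr.G) : V ⨯ M.X ⟶ V ⨯ M.X :=
  prod.lift prod.fst (asm M (prod.fst ≫ γ) prod.snd)

lemma twist_inv_right (M : GObject Gr) {V : C} (γ : V ⟶ Gr.G) :
    twist M γ ≫ twist M (ginv γ) = 𝟙 (V ⨯ M.X) := by
  unfold twist
  rw [prod.comp_lift, prod.lift_fst, comp_asm, prod.lift_snd, ← Category.assoc,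
    prod.lift_fst, comp_ginv, asm_cancel, prod.lift_fst_snd]

lemma twist_inv_left (M : GObject Gr) {V : C} (γ : V ⟶ Gr.G) :
    twist M (ginv γ) ≫ twist M γ = 𝟙 (V ⨯ M.X) := by
  unfold twist
  rw [prod.comp_lift, prod.lift_fst, comp_asm, prod.lift_snd, ← Category.assoc,
    prod.lift_fst, comp_ginv, asm_cancel', prod.lift_fst_snd]

lemma twist_map (f : Xa ⟶ Yb) {V : C} (γ : V ⟶ Gr.G) :
    twist Xa γ ≫ prod.map (𝟙 V) f.f = prod.map (𝟙 V) f.f ≫ twist Yb γ := by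
  unfold twist
  apply Limits.prod.hom_ext
  · rw [Category.assoc, prod.map_fst, ← Category.assoc, prod.lift_fst, Category.comp_id,
      Category.assoc, prod.lift_fst, prod.map_fst, Category.comp_id]
  · have l1 : (prod.lift prod.fst (asm Xa (prod.fst ≫ γ) prod.snd) ≫ prod.map (𝟙 V) f.f)
          ≫ prod.snd = asm Yb (prod.fst ≫ γ) (prod.snd ≫ f.f) := by
      rw [Category.assoc, prod.map_snd, ← Category.assoc, prod.lift_snd, asm_comp_f f]
    have l2 : (prod.map (𝟙 V) f.f ≫ prod.lift prod.fst (asm Yb (prod.fst ≫ γ) prod.snd))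
          ≫ prod.snd = asm Yb (prod.fst ≫ γ) (prod.snd ≫ f.f) := by
      rw [Category.assoc, prod.lift_snd, comp_asm]
      have h3 : prod.map (𝟙 V) f.f ≫ prod.fst ≫ γ = prod.fst ≫ γ := by
        rw [← Category.assoc, prod.map_fst, Category.assoc, Category.id_comp]
      rw [h3, prod.map_snd]
    rw [l1, l2]

/-- The key lemma: a left adjoint of `S^f` commutes with action twists. -/
lemma twist_E (f : Xa ⟶ Yb) (E : pow (Sierp C) Xa.X ⟶ pow (Sierp C) Yb.X)
    (hadj : ∀ (Z : Cᵒᵖ) (u : Opposite.unop Z ⨯ Xa.X ⟶ Sierp C)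
      (v : Opposite.unop Z ⨯ Yb.X ⟶ Sierp C),
      (E.app Z u : Opposite.unop Z ⨯ Yb.X ⟶ Sierp C) ≤ v ↔
        u ≤ ((powMap (Sierp C) f.f).app Z v : Opposite.unop Z ⨯ Xa.X ⟶ Sierp C))
    {V : C} (γ : V ⟶ Gr.G) (u : V ⨯ Xa.X ⟶ Sierp C) :
    E.app (Opposite.op V) (twist Xa γ ≫ u) = twist Yb γ ≫ E.app (Opposite.op V) u := by
  have chain : ∀ v : V ⨯ Yb.X ⟶ Sierp C,
      (E.app (Opposite.op V) (twist Xa γ ≫ u) : V ⨯ Yb.X ⟶ Sierp C) ≤ v ↔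
      twist Yb γ ≫ E.app (Opposite.op V) u ≤ v := by
    intro v
    have s1 : (E.app (Opposite.op V) (twist Xa γ ≫ u) : V ⨯ Yb.X ⟶ Sierp C) ≤ v ↔
        twist Xa γ ≫ u ≤ prod.map (𝟙 V) f.f ≫ v := hadj (Opposite.op V) _ v
    have s2 : twist Xa γ ≫ u ≤ prod.map (𝟙 V) f.f ≫ v ↔
        u ≤ twist Xa (ginv γ) ≫ prod.map (𝟙 V) f.f ≫ v :=
      pre_iso_le_iff (twist_inv_right Xa γ) (twist_inv_left Xa γ) _ _
    have s3 : twist Xa (ginv γ) ≫ prod.map (𝟙 V) f.f ≫ v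
        = prod.map (𝟙 V) f.f ≫ twist Yb (ginv γ) ≫ v := by
      rw [← Category.assoc, twist_map f (ginv γ), Category.assoc]
    have s4 : u ≤ prod.map (𝟙 V) f.f ≫ twist Yb (ginv γ) ≫ v ↔
        (E.app (Opposite.op V) u : V ⨯ Yb.X ⟶ Sierp C) ≤ twist Yb (ginv γ) ≫ v :=
      (hadj (Opposite.op V) u _).symm
    have s5 : (E.app (Opposite.op V) u : V ⨯ Yb.X ⟶ Sierp C) ≤ twist Yb (ginv γ) ≫ v ↔
        twist Yb γ ≫ E.app (Opposite.op V) u ≤ v :=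
      (pre_iso_le_iff (twist_inv_right Yb γ) (twist_inv_left Yb γ) _ _).symm
    rw [s1, s2, s3, s4, s5]
  exact le_antisymm ((chain _).mpr (le_refl _)) ((chain _).mp (le_refl _))

/-- Naturality of a transformation `S^X ⟶ S^Y`, in elementwise form. -/
lemma pow_nat {A B : C} (E : pow (Sierp C) A ⟶ pow (Sierp C) B) {V W : C} (g : V ⟶ W)
    (u : W ⨯ A ⟶ Sierp C) :
    E.app (Opposite.op V) (prod.map g (𝟙 A) ≫ u)
      = prod.map g (𝟙 B) ≫ E.app (Opposite.op W) u := by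
  exact ConcreteCategory.congr_hom (E.naturality (g.op : Opposite.op W ⟶ Opposite.op V)) u

noncomputable def sIso (Gr : GroupObject C) (W M : C) :
    (Gr.G ⨯ W) ⨯ M ⟶ Gr.G ⨯ (W ⨯ M) :=
  prod.lift (prod.fst ≫ prod.fst) (prod.lift (prod.fst ≫ prod.snd) prod.snd)

lemma cancel_sIso {W M Q : C} {a b : Gr.G ⨯ (W ⨯ M) ⟶ Q}
    (h : sIso Gr W M ≫ a = sIso Gr W M ≫ b) : a = b := by
  have hs : (prod.lift (prod.lift prod.fst (prod.snd ≫ prod.fst)) (prod.snd ≫ prod.snd) :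
      Gr.G ⨯ (W ⨯ M) ⟶ (Gr.G ⨯ W) ⨯ M) ≫ sIso Gr W M = 𝟙 _ := by
    unfold sIso
    apply Limits.prod.hom_ext
    · simp [prod.lift_fst, prod.lift_snd, prod.lift_fst_assoc, prod.lift_snd_assoc]
    · apply Limits.prod.hom_ext <;> simp [prod.lift_fst, prod.lift_snd, prod.lift_fst_assoc, prod.lift_snd_assoc]
  calc a = 𝟙 _ ≫ a := (Category.id_comp a).symm
    _ = prod.lift (prod.lift prod.fst (prod.snd ≫ prod.fst)) (prod.snd ≫ prod.snd)
          ≫ sIso Gr W M ≫ a := by rw [← Category.assoc, hs]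
    _ = prod.lift (prod.lift prod.fst (prod.snd ≫ prod.fst)) (prod.snd ≫ prod.snd)
          ≫ sIso Gr W M ≫ b := by rw [h]
    _ = 𝟙 _ ≫ b := by rw [← Category.assoc, hs]
    _ = b := Category.id_comp b

lemma asm_proj (Z : GObject Gr) (M : C) :
    asm Z ((prod.fst : (Gr.G ⨯ Z.X) ⨯ M ⟶ _) ≫ prod.fst)
        ((prod.fst : (Gr.G ⨯ Z.X) ⨯ M ⟶ _) ≫ prod.snd)
      = prod.fst ≫ Z.act := by
  unfold asm
  rw [← prod.comp_lift, prod.lift_fst_snd, Category.comp_id]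

lemma sIso_comp_productAction (Z M : GObject Gr) :
    sIso Gr Z.X M.X ≫ productAction Gr Z M
      = twist M (prod.fst : Gr.G ⨯ Z.X ⟶ Gr.G) ≫ prod.map Z.act (𝟙 M.X) := by
  rw [productAction_eq]
  unfold sIso twist
  have e1 : (prod.lift (prod.fst ≫ prod.fst)
        (prod.lift (prod.fst ≫ prod.snd) (prod.snd : (Gr.G ⨯ Z.X) ⨯ M.X ⟶ M.X)))
        ≫ prod.snd ≫ prod.fst = prod.fst ≫ prod.snd := by
    rw [← Category.assoc, prod.lift_snd, prod.lift_fst]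
  have e2 : (prod.lift (prod.fst ≫ prod.fst)
        (prod.lift (prod.fst ≫ prod.snd) (prod.snd : (Gr.G ⨯ Z.X) ⨯ M.X ⟶ M.X)))
        ≫ prod.snd ≫ prod.snd = prod.snd := by
    rw [← Category.assoc, prod.lift_snd, prod.lift_snd]
  rw [prod.comp_lift, comp_asm, comp_asm, prod.lift_fst, e1, e2, prod.lift_map,
    Category.comp_id, asm_proj]

lemma map_snd_eq (W M : C) :
    (prod.map prod.snd (𝟙 M) : (Gr.G ⨯ W) ⨯ M ⟶ W ⨯ M)
      = prod.lift (prod.fst ≫ prod.snd) prod.snd := by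
  apply Limits.prod.hom_ext <;> simp [prod.lift_fst, prod.lift_snd, prod.lift_fst_assoc, prod.lift_snd_assoc]

lemma sIso_comp_snd (W M : C) :
    sIso Gr W M ≫ prod.snd = prod.map prod.snd (𝟙 M) := by
  rw [map_snd_eq]
  unfold sIso
  rw [prod.lift_snd]

/-- Equivariance of `E u` for equivariant `u`. -/
lemma E_equivariant (f : Xa ⟶ Yb) (E : pow (Sierp C) Xa.X ⟶ pow (Sierp C) Yb.X)
    (hadj : ∀ (Z : Cᵒᵖ) (u : Opposite.unop Z ⨯ Xa.X ⟶ Sierp C)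
      (v : Opposite.unop Z ⨯ Yb.X ⟶ Sierp C),
      (E.app Z u : Opposite.unop Z ⨯ Yb.X ⟶ Sierp C) ≤ v ↔
        u ≤ ((powMap (Sierp C) f.f).app Z v : Opposite.unop Z ⨯ Xa.X ⟶ Sierp C))
    (Z : GObject Gr) (u : Z.X ⨯ Xa.X ⟶ Sierp C)
    (hu : productAction Gr Z Xa ≫ u = prod.snd ≫ u) :
    productAction Gr Z Yb ≫ E.app (Opposite.op Z.X) u
      = prod.snd ≫ E.app (Opposite.op Z.X) u := by
  apply cancel_sIso (Gr := Gr)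
  erw [← Category.assoc, ← Category.assoc, sIso_comp_productAction, sIso_comp_snd]
  erw [Category.assoc, ← pow_nat E Z.act u, ← twist_E f E hadj prod.fst]
  rw [← pow_nat E prod.snd u]
  congr 1
  have step : twist Xa (prod.fst : Gr.G ⨯ Z.X ⟶ Gr.G) ≫ prod.map Z.act (𝟙 Xa.X)
      = prod.lift (asm Z (prod.fst ≫ prod.fst) (prod.fst ≫ prod.snd))
          (asm Xa (prod.fst ≫ prod.fst) prod.snd) := by
    unfold twist
    rw [prod.lift_map, Category.comp_id, asm_proj]
  rw [← Category.assoc, step, (equivariant_iff Z Xa u).mp hu, map_snd_eq]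

/-- The induced candidate left adjoint on the `G`-object level. -/
noncomputable def EhatG (f : Xa ⟶ Yb) (E : pow (Sierp C) Xa.X ⟶ pow (Sierp C) Yb.X)
    (hadj : ∀ (Z : Cᵒᵖ) (u : Opposite.unop Z ⨯ Xa.X ⟶ Sierp C)
      (v : Opposite.unop Z ⨯ Yb.X ⟶ Sierp C),
      (E.app Z u : Opposite.unop Z ⨯ Yb.X ⟶ Sierp C) ≤ v ↔
        u ≤ ((powMap (Sierp C) f.f).app Z v : Opposite.unop Z ⨯ Xa.X ⟶ Sierp C)) :
    gpow Gr (Sierp C) Xa ⟶ gpow Gr (Sierp C) Yb where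
  app Z := TypeCat.ofHom fun u => ⟨E.app (Opposite.op (Opposite.unop Z).X) u.1,
    E_equivariant f E hadj (Opposite.unop Z) u.1 u.2⟩
  naturality Z W g := by
    ext u
    apply Subtype.ext
    show E.app (Opposite.op (Opposite.unop W).X) (prod.map g.unop.f (𝟙 Xa.X) ≫ u.1)
      = prod.map g.unop.f (𝟙 Yb.X) ≫ E.app (Opposite.op (Opposite.unop Z).X) u.1
    exact pow_nat E g.unop.f u.1


end GOpenMPR




section GOpenMP

variable {Xa Yb : GObject Gr}

lemma gmul_assoc {T : C} (g h k : T ⟶ Gr.G) : gmul (gmul g h) k = gmul g (gmul h k) := by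
  have key := congrArg (fun t => prod.lift (prod.lift g h) k ≫ t) Gr.mul_assoc
  have h1 : prod.lift (prod.lift g h) k ≫ prod.map Gr.m (𝟙 Gr.G) ≫ Gr.m
      = gmul (gmul g h) k := by
    rw [← Category.assoc, prod.lift_map, Category.comp_id]; rfl
  have h2 : prod.lift (prod.lift g h) k
        ≫ (prod.associator Gr.G Gr.G Gr.G).hom ≫ prod.map (𝟙 Gr.G) Gr.m ≫ Gr.m
      = gmul g (gmul h k) := by
    have ha : prod.lift (prod.lift g h) k ≫ (prod.associator Gr.G Gr.G Gr.G).hom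
        = prod.lift g (prod.lift h k) := by
      apply Limits.prod.hom_ext
      · simp [Limits.prod.associator, prod.lift_fst, prod.lift_snd, prod.lift_fst_assoc, prod.lift_snd_assoc]
      · apply Limits.prod.hom_ext <;> simp [Limits.prod.associator, prod.lift_fst, prod.lift_snd, prod.lift_fst_assoc, prod.lift_snd_assoc]
    rw [← Category.assoc, ha, ← Category.assoc, prod.lift_map, Category.comp_id]; rfl
  rw [← h1, key, h2]

/-- The free `G`-object on `W`. -/
noncomputable def freeG (Gr : GroupObject C) (W : C) : GObject Gr where
  X := Gr.G ⨯ W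
  act := prod.lift (gmul prod.fst (prod.snd ≫ prod.fst)) (prod.snd ≫ prod.snd)
  act_one := by
    rw [prod.comp_lift, comp_gmul]
    have e1 : prod.lift (terminal.from (Gr.G ⨯ W) ≫ Gr.e) (𝟙 (Gr.G ⨯ W)) ≫ prod.fst
        = gone Gr (Gr.G ⨯ W) := prod.lift_fst _ _
    have e2 : prod.lift (terminal.from (Gr.G ⨯ W) ≫ Gr.e) (𝟙 (Gr.G ⨯ W))
        ≫ prod.snd ≫ prod.fst = prod.fst := by
      rw [← Category.assoc, prod.lift_snd, Category.id_comp]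
    have e3 : prod.lift (terminal.from (Gr.G ⨯ W) ≫ Gr.e) (𝟙 (Gr.G ⨯ W))
        ≫ prod.snd ≫ prod.snd = prod.snd := by
      rw [← Category.assoc, prod.lift_snd, Category.id_comp]
    rw [e1, e2, e3, gone_mul, prod.lift_fst_snd]
  act_mul := by
    apply Limits.prod.hom_ext
    · simp only [Category.assoc, prod.lift_fst, prod.lift_snd, prod.lift_fst_assoc,
        prod.lift_snd_assoc, prod.map_fst, prod.map_snd, prod.map_fst_assoc,
        prod.map_snd_assoc, comp_gmul, Category.id_comp, Category.comp_id,
        Limits.prod.associator, prod.comp_lift, prod.comp_lift_assoc]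
      show gmul prod.fst (gmul (prod.snd ≫ prod.fst) (prod.snd ≫ prod.snd ≫ prod.fst))
        = gmul (gmul prod.fst (prod.snd ≫ prod.fst)) (prod.snd ≫ prod.snd ≫ prod.fst)
      rw [gmul_assoc]
    · simp only [Category.assoc, prod.lift_fst, prod.lift_snd, prod.lift_fst_assoc,
        prod.lift_snd_assoc, prod.map_fst, prod.map_snd, prod.map_fst_assoc,
        prod.map_snd_assoc, comp_gmul, Category.id_comp, Category.comp_id,
        Limits.prod.associator, prod.comp_lift, prod.comp_lift_assoc]

/-- The free `G`-map on `g`. -/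
noncomputable def freeMap (Gr : GroupObject C) {W' W : C} (g : W' ⟶ W) :
    freeG Gr W' ⟶ freeG Gr W where
  f := prod.map (𝟙 Gr.G) g
  equivariant := by
    show (prod.lift (gmul prod.fst (prod.snd ≫ prod.fst)) (prod.snd ≫ prod.snd)
        : Gr.G ⨯ (Gr.G ⨯ W') ⟶ Gr.G ⨯ W') ≫ prod.map (𝟙 Gr.G) g
      = prod.map (𝟙 Gr.G) (prod.map (𝟙 Gr.G) g)
        ≫ (prod.lift (gmul prod.fst (prod.snd ≫ prod.fst)) (prod.snd ≫ prod.snd)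
          : Gr.G ⨯ (Gr.G ⨯ W) ⟶ Gr.G ⨯ W)
    apply Limits.prod.hom_ext <;>
      simp [comp_gmul, prod.lift_fst, prod.lift_snd, prod.lift_fst_assoc, prod.lift_snd_assoc, prod.map_fst, prod.map_snd, prod.map_fst_assoc, prod.map_snd_assoc]

lemma asm_free {W T : C} (g : T ⟶ Gr.G) (v : T ⟶ Gr.G ⨯ W) :
    asm (freeG Gr W) g v = prod.lift (gmul g (v ≫ prod.fst)) (v ≫ prod.snd) := by
  show prod.lift g v
      ≫ prod.lift (gmul prod.fst (prod.snd ≫ prod.fst)) (prod.snd ≫ prod.snd) = _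
  rw [prod.comp_lift, comp_gmul, prod.lift_fst]
  have e1 : prod.lift g v ≫ prod.snd ≫ prod.fst = v ≫ prod.fst := by
    rw [← Category.assoc, prod.lift_snd]
  have e2 : prod.lift g v ≫ prod.snd ≫ prod.snd = v ≫ prod.snd := by
    rw [← Category.assoc, prod.lift_snd]
  rw [e1, e2]

/-- The "untwisting" map `(G × W) × M ⟶ W × M`, `((h,w),x) ↦ (w, h⁻¹·x)`. -/
noncomputable def tMap (M : GObject Gr) (W : C) : (Gr.G ⨯ W) ⨯ M.X ⟶ W ⨯ M.X :=
  prod.lift (prod.fst ≫ prod.snd) (asm M (ginv (prod.fst ≫ prod.fst)) prod.snd)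

/-- Equivariance for the free action, with reduced types. -/
lemma free_equivariant_iff (M : GObject Gr) {W S' : C} (u : (Gr.G ⨯ W) ⨯ M.X ⟶ S') :
    (productAction Gr (freeG Gr W) M ≫ u = prod.snd ≫ u) ↔
    ∀ {T : C} (g : T ⟶ Gr.G) (v : T ⟶ Gr.G ⨯ W) (x : T ⟶ M.X),
      prod.lift (prod.lift (gmul g (v ≫ prod.fst)) (v ≫ prod.snd)) (asm M g x) ≫ u
        = prod.lift v x ≫ u := by
  constructor
  · intro hv T g v x
    have key := (equivariant_iff (freeG Gr W) M u).mp hv g v x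
    rwa [asm_free g v] at key
  · intro h
    apply (equivariant_iff (freeG Gr W) M u).mpr
    intro T g v x
    rw [asm_free g v]
    exact h g v x

lemma lift_asm_comp_tMap (M : GObject Gr) {W T : C} (g : T ⟶ Gr.G)
    (v : T ⟶ Gr.G ⨯ W) (x : T ⟶ M.X) :
    prod.lift (prod.lift (gmul g (v ≫ prod.fst)) (v ≫ prod.snd)) (asm M g x) ≫ tMap M W
      = prod.lift (v ≫ prod.snd) (asm M (ginv (v ≫ prod.fst)) x) := by
  unfold tMap
  rw [prod.comp_lift, comp_asm]
  have e1 : prod.lift (prod.lift (gmul g (v ≫ prod.fst)) (v ≫ prod.snd)) (asm M g x)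
      ≫ prod.fst ≫ prod.snd = v ≫ prod.snd := by
    rw [← Category.assoc, prod.lift_fst, prod.lift_snd]
  have e2 : prod.lift (prod.lift (gmul g (v ≫ prod.fst)) (v ≫ prod.snd)) (asm M g x)
      ≫ ginv (prod.fst ≫ prod.fst) = ginv (gmul g (v ≫ prod.fst)) := by
    rw [comp_ginv, ← Category.assoc, prod.lift_fst, prod.lift_fst]
  rw [e1, e2, prod.lift_snd, asm_inv_mul_rev]

lemma tMap_equivariant (M : GObject Gr) {W S' : C} (u : W ⨯ M.X ⟶ S') :
    productAction Gr (freeG Gr W) M ≫ (tMap M W ≫ u) = prod.snd ≫ (tMap M W ≫ u) := by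
  apply (free_equivariant_iff M (tMap M W ≫ u)).mpr
  intro T g v x
  rw [← Category.assoc, ← Category.assoc, lift_asm_comp_tMap]
  have e0 : prod.lift v x ≫ tMap M W
      = prod.lift (v ≫ prod.snd) (asm M (ginv (v ≫ prod.fst)) x) := by
    unfold tMap
    rw [prod.comp_lift, comp_asm, comp_ginv]
    have e1 : prod.lift v x ≫ (prod.fst : (Gr.G ⨯ W) ⨯ M.X ⟶ Gr.G ⨯ W) ≫ prod.snd
        = v ≫ prod.snd := by
      rw [← Category.assoc, prod.lift_fst]
    have e2 : prod.lift v x ≫ (prod.fst : (Gr.G ⨯ W) ⨯ M.X ⟶ Gr.G ⨯ W) ≫ prod.fst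
        = v ≫ prod.fst := by
      rw [← Category.assoc, prod.lift_fst]
    rw [e1, e2, prod.lift_snd]
  rw [e0]

/-- The unit section `W ⟶ G × W`. -/
noncomputable def iotaW (Gr : GroupObject C) (W : C) : W ⟶ Gr.G ⨯ W :=
  prod.lift (gone Gr W) (𝟙 W)

lemma iota_tMap (M : GObject Gr) (W : C) :
    prod.map (iotaW Gr W) (𝟙 M.X) ≫ tMap M W = 𝟙 (W ⨯ M.X) := by
  unfold tMap
  have e1 : prod.map (iotaW Gr W) (𝟙 M.X) ≫ prod.fst ≫ prod.snd = prod.fst := by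
    rw [← Category.assoc, prod.map_fst]
    unfold iotaW
    rw [Category.assoc, prod.lift_snd, Category.comp_id]
  have e2 : prod.map (iotaW Gr W) (𝟙 M.X) ≫ prod.fst ≫ prod.fst = gone Gr (W ⨯ M.X) := by
    rw [← Category.assoc, prod.map_fst]
    unfold iotaW
    rw [Category.assoc, prod.lift_fst, comp_gone]
  have e3 : prod.map (iotaW Gr W) (𝟙 M.X) ≫ prod.snd = prod.snd := by
    rw [prod.map_snd, Category.comp_id]
  rw [prod.comp_lift, comp_asm, comp_ginv, e1, e2, e3, ginv_gone, asm_one, prod.lift_fst_snd]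

lemma tMap_iota_equivariant (M : GObject Gr) {W : C} (v : (Gr.G ⨯ W) ⨯ M.X ⟶ Sierp C)
    (hv : productAction Gr (freeG Gr W) M ≫ v = prod.snd ≫ v) :
    tMap M W ≫ prod.map (iotaW Gr W) (𝟙 M.X) ≫ v = v := by
  have key := (free_equivariant_iff M v).mp hv (prod.fst ≫ prod.fst)
    (prod.lift (gone Gr ((Gr.G ⨯ W) ⨯ M.X)) (prod.fst ≫ prod.snd))
    (asm M (ginv (prod.fst ≫ prod.fst)) prod.snd)
  rw [prod.lift_fst, prod.lift_snd, gmul_one, ← prod.comp_lift, prod.lift_fst_snd,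
    Category.comp_id, asm_cancel', prod.lift_fst_snd, Category.id_comp] at key
  have lhs_eq : tMap M W ≫ prod.map (iotaW Gr W) (𝟙 M.X)
      = prod.lift (prod.lift (gone Gr ((Gr.G ⨯ W) ⨯ M.X)) (prod.fst ≫ prod.snd))
          (asm M (ginv (prod.fst ≫ prod.fst)) prod.snd) := by
    unfold tMap
    have e : (prod.fst ≫ prod.snd : (Gr.G ⨯ W) ⨯ M.X ⟶ W) ≫ iotaW Gr W
        = prod.lift (gone Gr ((Gr.G ⨯ W) ⨯ M.X)) (prod.fst ≫ prod.snd) := by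
      unfold iotaW
      rw [prod.comp_lift, comp_gone, Category.comp_id]
    rw [prod.lift_map, Category.comp_id, e]
  rw [← Category.assoc, lhs_eq, ← key]

lemma tMap_map_f (f : Xa ⟶ Yb) (W : C) :
    tMap Xa W ≫ prod.map (𝟙 W) f.f
      = prod.map (𝟙 (Gr.G ⨯ W)) f.f ≫ tMap Yb W := by
  unfold tMap
  apply Limits.prod.hom_ext
  · rw [Category.assoc, prod.map_fst, ← Category.assoc, prod.lift_fst, Category.comp_id,
      Category.assoc, prod.lift_fst, ← Category.assoc, prod.map_fst, Category.assoc,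
      Category.id_comp]
  · have l1 : (prod.lift (prod.fst ≫ prod.snd) (asm Xa (ginv (prod.fst ≫ prod.fst)) prod.snd)
        ≫ prod.map (𝟙 W) f.f) ≫ prod.snd
        = asm Yb (ginv (prod.fst ≫ prod.fst)) (prod.snd ≫ f.f) := by
      rw [Category.assoc, prod.map_snd, ← Category.assoc, prod.lift_snd, asm_comp_f f]
    have l2 : (prod.map (𝟙 (Gr.G ⨯ W)) f.f ≫ prod.lift (prod.fst ≫ prod.snd)
        (asm Yb (ginv (prod.fst ≫ prod.fst)) prod.snd)) ≫ prod.snd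
        = asm Yb (ginv (prod.fst ≫ prod.fst)) (prod.snd ≫ f.f) := by
      rw [Category.assoc, prod.lift_snd, comp_asm, comp_ginv, prod.map_snd]
      have e : prod.map (𝟙 (Gr.G ⨯ W)) f.f ≫ prod.fst ≫ prod.fst = prod.fst ≫ prod.fst := by
        rw [← Category.assoc, prod.map_fst, Category.assoc, Category.id_comp]
      rw [e]
    rw [l1, l2]

lemma comp_elMeet {S' : C} (meet : S' ⨯ S' ⟶ S') {P Q : C} (σ : P ⟶ Q) (u v : Q ⟶ S') :
    σ ≫ elMeet meet u v = elMeet meet (σ ≫ u) (σ ≫ v) := by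
  unfold elMeet
  rw [← Category.assoc, prod.comp_lift]

lemma iota_natural (Gr : GroupObject C) {W' W : C} (g : W' ⟶ W) :
    iotaW Gr W' ≫ prod.map (𝟙 Gr.G) g = g ≫ iotaW Gr W := by
  apply Limits.prod.hom_ext <;> simp [iotaW, comp_gone, prod.lift_fst, prod.lift_snd]

lemma tMap_natural (M : GObject Gr) {W' W : C} (g : W' ⟶ W) :
    tMap M W' ≫ prod.map g (𝟙 M.X)
      = prod.map (prod.map (𝟙 Gr.G) g) (𝟙 M.X) ≫ tMap M W := by
  unfold tMap
  apply Limits.prod.hom_ext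
  · simp [prod.lift_fst, prod.lift_snd, prod.lift_fst_assoc, prod.lift_snd_assoc]
  · simp [comp_asm, comp_ginv, prod.lift_fst, prod.lift_snd, prod.lift_fst_assoc, prod.lift_snd_assoc]

@[simp] lemma gMeet_fst (Xc : GObject Gr) (Z : (GObject Gr)ᵒᵖ)
    (u v : (gpow Gr (Sierp C) Xc).obj Z) :
    (gMeet Xc Z u v).1 = elMeet SC.meet u.1 v.1 := rfl

/-- The induced candidate left adjoint on the underlying-space level. -/
noncomputable def EfromG (f : Xa ⟶ Yb) (Eg : gpow Gr (Sierp C) Xa ⟶ gpow Gr (Sierp C) Yb) :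
    pow (Sierp C) Xa.X ⟶ pow (Sierp C) Yb.X where
  app Wop := TypeCat.ofHom fun u => prod.map (iotaW Gr (Opposite.unop Wop)) (𝟙 Yb.X)
    ≫ (Eg.app (Opposite.op (freeG Gr (Opposite.unop Wop)))
        ⟨tMap Xa (Opposite.unop Wop) ≫ u, tMap_equivariant Xa u⟩).1
  naturality Wop W'op h := by
    ext u
    have hU : (⟨tMap Xa (Opposite.unop W'op) ≫ (prod.map h.unop (𝟙 Xa.X) ≫ u),
          tMap_equivariant Xa (prod.map h.unop (𝟙 Xa.X) ≫ u)⟩ :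
          (gpow Gr (Sierp C) Xa).obj (Opposite.op (freeG Gr (Opposite.unop W'op))))
        = (gpow Gr (Sierp C) Xa).map ((freeMap Gr h.unop).op)
            ⟨tMap Xa (Opposite.unop Wop) ≫ u, tMap_equivariant Xa u⟩ := by
      apply Subtype.ext
      show tMap Xa (Opposite.unop W'op) ≫ (prod.map h.unop (𝟙 Xa.X) ≫ u)
        = prod.map (prod.map (𝟙 Gr.G) h.unop) (𝟙 Xa.X) ≫ tMap Xa (Opposite.unop Wop) ≫ u
      erw [← Category.assoc, tMap_natural, Category.assoc]
    have hnat := ConcreteCategory.congr_hom (Eg.naturality ((freeMap Gr h.unop).op))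
      (⟨tMap Xa (Opposite.unop Wop) ≫ u, tMap_equivariant Xa u⟩ :
        (gpow Gr (Sierp C) Xa).obj (Opposite.op (freeG Gr (Opposite.unop Wop))))
    simp only [types_comp_apply] at hnat
    have hcomp : prod.map (iotaW Gr (Opposite.unop W'op)) (𝟙 Yb.X)
          ≫ prod.map (prod.map (𝟙 Gr.G) h.unop) (𝟙 Yb.X)
        = prod.map h.unop (𝟙 Yb.X) ≫ prod.map (iotaW Gr (Opposite.unop Wop)) (𝟙 Yb.X) := by
      rw [prod.map_map, prod.map_map, iota_natural]
    show prod.map (iotaW Gr (Opposite.unop W'op)) (𝟙 Yb.X)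
        ≫ (Eg.app (Opposite.op (freeG Gr (Opposite.unop W'op)))
            ⟨tMap Xa (Opposite.unop W'op) ≫ (prod.map h.unop (𝟙 Xa.X) ≫ u),
              tMap_equivariant Xa (prod.map h.unop (𝟙 Xa.X) ≫ u)⟩).1
      = prod.map h.unop (𝟙 Yb.X) ≫ prod.map (iotaW Gr (Opposite.unop Wop)) (𝟙 Yb.X)
        ≫ (Eg.app (Opposite.op (freeG Gr (Opposite.unop Wop)))
            ⟨tMap Xa (Opposite.unop Wop) ≫ u, tMap_equivariant Xa u⟩).1
    erw [hU, hnat]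
    show prod.map (iotaW Gr (Opposite.unop W'op)) (𝟙 Yb.X)
        ≫ prod.map (prod.map (𝟙 Gr.G) h.unop) (𝟙 Yb.X)
        ≫ (Eg.app (Opposite.op (freeG Gr (Opposite.unop Wop)))
            ⟨tMap Xa (Opposite.unop Wop) ≫ u, tMap_equivariant Xa u⟩).1
      = prod.map h.unop (𝟙 Yb.X) ≫ prod.map (iotaW Gr (Opposite.unop Wop)) (𝟙 Yb.X)
        ≫ (Eg.app (Opposite.op (freeG Gr (Opposite.unop Wop)))
            ⟨tMap Xa (Opposite.unop Wop) ≫ u, tMap_equivariant Xa u⟩).1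
    erw [← Category.assoc, ← Category.assoc, hcomp]

end GOpenMP

/-- A `G`-homomorphism is open in `[G, C]` if and only if its underlying morphism is
open in `C`. -/
theorem ghom_open_iff_open {Xa Yb : GObject Gr} (f : Xa ⟶ Yb) :
    (∃ E, GIsOpenVia f E) ↔ IsOpenMor f.f := by
  constructor
  · rintro ⟨Eg, hGadj, hGfrob⟩
    refine ⟨EfromG f Eg, ?_, ?_⟩
    · intro Z u v
      show prod.map (iotaW Gr (Opposite.unop Z)) (𝟙 Yb.X)
          ≫ (Eg.app (Opposite.op (freeG Gr (Opposite.unop Z)))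
              ⟨tMap Xa (Opposite.unop Z) ≫ u, tMap_equivariant Xa u⟩).1 ≤ v
        ↔ u ≤ prod.map (𝟙 (Opposite.unop Z)) f.f ≫ v
      have eqX : ((gpowMap Gr (Sierp C) f).app (Opposite.op (freeG Gr (Opposite.unop Z)))
            ⟨tMap Yb (Opposite.unop Z) ≫ v, tMap_equivariant Yb v⟩).1
          = tMap Xa (Opposite.unop Z) ≫ prod.map (𝟙 (Opposite.unop Z)) f.f ≫ v := by
        show prod.map (𝟙 (Gr.G ⨯ Opposite.unop Z)) f.f ≫ tMap Yb (Opposite.unop Z) ≫ v = _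
        rw [← Category.assoc, ← tMap_map_f f, Category.assoc]
      have hiota : ∀ (M : GObject Gr) (t : Opposite.unop Z ⨯ M.X ⟶ Sierp C),
          prod.map (iotaW Gr (Opposite.unop Z)) (𝟙 M.X) ≫ tMap M (Opposite.unop Z) ≫ t
            = t := by
        intro M t
        rw [← Category.assoc, iota_tMap, Category.id_comp]
      constructor
      · intro h
        have h1 := pre_mono (tMap Yb (Opposite.unop Z)) h
        have h2 : (Eg.app (Opposite.op (freeG Gr (Opposite.unop Z)))
              ⟨tMap Xa (Opposite.unop Z) ≫ u, tMap_equivariant Xa u⟩).1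
            ≤ tMap Yb (Opposite.unop Z) ≫ v :=
          (le_of_eq (tMap_iota_equivariant Yb _
            (Eg.app (Opposite.op (freeG Gr (Opposite.unop Z)))
              ⟨tMap Xa (Opposite.unop Z) ≫ u, tMap_equivariant Xa u⟩).2).symm).trans h1
        have h3 := (hGadj (Opposite.op (freeG Gr (Opposite.unop Z)))
          ⟨tMap Xa (Opposite.unop Z) ≫ u, tMap_equivariant Xa u⟩
          ⟨tMap Yb (Opposite.unop Z) ≫ v, tMap_equivariant Yb v⟩).mp h2
        have h4 : tMap Xa (Opposite.unop Z) ≫ u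
            ≤ tMap Xa (Opposite.unop Z) ≫ prod.map (𝟙 (Opposite.unop Z)) f.f ≫ v :=
          h3.trans (le_of_eq eqX)
        have h5 := pre_mono (prod.map (iotaW Gr (Opposite.unop Z)) (𝟙 Xa.X)) h4
        exact (le_of_eq (hiota Xa u).symm).trans
          (h5.trans (le_of_eq (hiota Xa (prod.map (𝟙 (Opposite.unop Z)) f.f ≫ v))))
      · intro h
        have h1 := pre_mono (tMap Xa (Opposite.unop Z)) h
        have h2 : tMap Xa (Opposite.unop Z) ≫ u
            ≤ ((gpowMap Gr (Sierp C) f).app (Opposite.op (freeG Gr (Opposite.unop Z)))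
              ⟨tMap Yb (Opposite.unop Z) ≫ v, tMap_equivariant Yb v⟩).1 :=
          h1.trans (le_of_eq eqX.symm)
        have h3 := (hGadj (Opposite.op (freeG Gr (Opposite.unop Z)))
          ⟨tMap Xa (Opposite.unop Z) ≫ u, tMap_equivariant Xa u⟩
          ⟨tMap Yb (Opposite.unop Z) ≫ v, tMap_equivariant Yb v⟩).mpr h2
        have h4 := pre_mono (prod.map (iotaW Gr (Opposite.unop Z)) (𝟙 Yb.X)) h3
        have h5 : prod.map (iotaW Gr (Opposite.unop Z)) (𝟙 Yb.X)
              ≫ (Eg.app (Opposite.op (freeG Gr (Opposite.unop Z)))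
                ⟨tMap Xa (Opposite.unop Z) ≫ u, tMap_equivariant Xa u⟩).1
            ≤ prod.map (iotaW Gr (Opposite.unop Z)) (𝟙 Yb.X)
              ≫ tMap Yb (Opposite.unop Z) ≫ v := h4
        exact h5.trans (le_of_eq (hiota Yb v))
    · intro Z u v
      show prod.map (iotaW Gr (Opposite.unop Z)) (𝟙 Yb.X)
          ≫ (Eg.app (Opposite.op (freeG Gr (Opposite.unop Z)))
              ⟨tMap Xa (Opposite.unop Z)
                  ≫ elMeet SC.meet u (prod.map (𝟙 (Opposite.unop Z)) f.f ≫ v),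
                tMap_equivariant Xa
                  (elMeet SC.meet u (prod.map (𝟙 (Opposite.unop Z)) f.f ≫ v))⟩).1
        = elMeet SC.meet
            (prod.map (iotaW Gr (Opposite.unop Z)) (𝟙 Yb.X)
              ≫ (Eg.app (Opposite.op (freeG Gr (Opposite.unop Z)))
                  ⟨tMap Xa (Opposite.unop Z) ≫ u, tMap_equivariant Xa u⟩).1) v
      have hsub : (⟨tMap Xa (Opposite.unop Z)
              ≫ elMeet SC.meet u (prod.map (𝟙 (Opposite.unop Z)) f.f ≫ v),
            tMap_equivariant Xa
              (elMeet SC.meet u (prod.map (𝟙 (Opposite.unop Z)) f.f ≫ v))⟩ :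
            (gpow Gr (Sierp C) Xa).obj (Opposite.op (freeG Gr (Opposite.unop Z))))
          = gMeet Xa (Opposite.op (freeG Gr (Opposite.unop Z)))
              ⟨tMap Xa (Opposite.unop Z) ≫ u, tMap_equivariant Xa u⟩
              ((gpowMap Gr (Sierp C) f).app (Opposite.op (freeG Gr (Opposite.unop Z)))
                ⟨tMap Yb (Opposite.unop Z) ≫ v, tMap_equivariant Yb v⟩) := by
        apply Subtype.ext
        show tMap Xa (Opposite.unop Z)
            ≫ elMeet SC.meet u (prod.map (𝟙 (Opposite.unop Z)) f.f ≫ v)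
          = elMeet SC.meet (tMap Xa (Opposite.unop Z) ≫ u)
              (prod.map (𝟙 (Gr.G ⨯ Opposite.unop Z)) f.f ≫ tMap Yb (Opposite.unop Z) ≫ v)
        have h5 : tMap Xa (Opposite.unop Z) ≫ prod.map (𝟙 (Opposite.unop Z)) f.f ≫ v
            = prod.map (𝟙 (Gr.G ⨯ Opposite.unop Z)) f.f
                ≫ tMap Yb (Opposite.unop Z) ≫ v := by
          rw [← Category.assoc, tMap_map_f f, Category.assoc]
        erw [comp_elMeet, h5]; rfl
      rw [hsub]
      have key := congrArg Subtype.val (hGfrob (Opposite.op (freeG Gr (Opposite.unop Z)))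
        ⟨tMap Xa (Opposite.unop Z) ≫ u, tMap_equivariant Xa u⟩
        ⟨tMap Yb (Opposite.unop Z) ≫ v, tMap_equivariant Yb v⟩)
      erw [key, gMeet_fst]
      have hval : (⟨tMap Yb (Opposite.unop Z) ≫ v, tMap_equivariant Yb v⟩ :
          (gpow Gr (Sierp C) Yb).obj (Opposite.op (freeG Gr (Opposite.unop Z)))).1
          = tMap Yb (Opposite.unop Z) ≫ v := rfl
      erw [hval, comp_elMeet]
      have h6 : prod.map (iotaW Gr (Opposite.unop Z)) (𝟙 Yb.X)
          ≫ tMap Yb (Opposite.unop Z) ≫ v = v := by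
        rw [← Category.assoc, iota_tMap, Category.id_comp]
      rw [h6]; rfl
  · rintro ⟨E, hadj, hfrob⟩
    refine ⟨EhatG f E hadj, ?_, ?_⟩
    · intro Z u v
      exact hadj (Opposite.op (Opposite.unop Z).X) u.1 v.1
    · intro Z u v
      exact Subtype.ext (hfrob (Opposite.op (Opposite.unop Z).X) u.1 v.1)
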